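/- arXiv:math/0602551 — 2 statements merged into one kernel-verified Lean document; each statement's English description precedes it below -/
import Mathlib

section
/- Let A₁ and A₂ be local algebras with maximal ideals I_{A₁} and I_{A₂}. Then the tensor product A₁ ⊗_ℝ A₂ is a local algebra, whose unique maximal ideal is I_{A₁} ⊗ A₂ + A₁ ⊗ I_{A₂}, and A₁ ⊗_ℝ A₂ modulo its maximal ideal is isomorphic to ℝ. -/
open scoped TensorProduct

lemma localAlg_nilpotent_of_mem_max {A : Type} [CommRing A] [Algebra ℝ A]
    [FiniteDimensional ℝ A] [IsLocalRing A] {a : A}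
    (ha : a ∈ IsLocalRing.maximalIdeal A) : IsNilpotent a := by
  haveI : IsArtinianRing A := isArtinian_of_tower ℝ inferInstance
  obtain ⟨n, hn⟩ := IsArtinianRing.isNilpotent_jacobson_bot (R := A)
  rw [IsLocalRing.jacobson_eq_maximalIdeal ⊥ bot_ne_top] at hn
  refine ⟨n, ?_⟩
  have : a ^ n ∈ (IsLocalRing.maximalIdeal A) ^ n := Ideal.pow_mem_pow ha n
  rw [hn] at this
  simpa using this

/-- Let `A₁`, `A₂` be local algebras with maximal ideals `I_{A₁}`, `I_{A₂}`.
Then `A₁ ⊗_ℝ A₂` is a local algebra whose unique maximal ideal is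
`I_{A₁} ⊗ A₂ + A₁ ⊗ I_{A₂}` (the ideal generated by simple tensors `a ⊗ b` with `a ∈ I_{A₁}`
or `b ∈ I_{A₂}`), and `A₁ ⊗_ℝ A₂` modulo its maximal ideal is isomorphic to `ℝ`. -/
theorem localAlgebra_tensorProduct_is_localAlgebra
    (A₁ : Type) [CommRing A₁] [Algebra ℝ A₁] [FiniteDimensional ℝ A₁] [IsLocalRing A₁]
    (hres₁ : Nonempty (IsLocalRing.ResidueField A₁ ≃ₐ[ℝ] ℝ))
    (A₂ : Type) [CommRing A₂] [Algebra ℝ A₂] [FiniteDimensional ℝ A₂] [IsLocalRing A₂]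
    (hres₂ : Nonempty (IsLocalRing.ResidueField A₂ ≃ₐ[ℝ] ℝ)) :
    FiniteDimensional ℝ (A₁ ⊗[ℝ] A₂) ∧
    (Ideal.span {x : A₁ ⊗[ℝ] A₂ | ∃ a : A₁, ∃ b : A₂,
      (a ∈ IsLocalRing.maximalIdeal A₁ ∨ b ∈ IsLocalRing.maximalIdeal A₂) ∧
      x = a ⊗ₜ[ℝ] b}).IsMaximal ∧
    (∀ M : Ideal (A₁ ⊗[ℝ] A₂), M.IsMaximal →
      M = Ideal.span {x : A₁ ⊗[ℝ] A₂ | ∃ a : A₁, ∃ b : A₂,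
        (a ∈ IsLocalRing.maximalIdeal A₁ ∨ b ∈ IsLocalRing.maximalIdeal A₂) ∧
        x = a ⊗ₜ[ℝ] b}) ∧
    Nonempty (((A₁ ⊗[ℝ] A₂) ⧸ Ideal.span {x : A₁ ⊗[ℝ] A₂ | ∃ a : A₁, ∃ b : A₂,
      (a ∈ IsLocalRing.maximalIdeal A₁ ∨ b ∈ IsLocalRing.maximalIdeal A₂) ∧
      x = a ⊗ₜ[ℝ] b}) ≃ₐ[ℝ] ℝ) := by
  obtain ⟨e₁⟩ := hres₁
  obtain ⟨e₂⟩ := hres₂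
  set S : Set (A₁ ⊗[ℝ] A₂) := {x : A₁ ⊗[ℝ] A₂ | ∃ a : A₁, ∃ b : A₂,
      (a ∈ IsLocalRing.maximalIdeal A₁ ∨ b ∈ IsLocalRing.maximalIdeal A₂) ∧
      x = a ⊗ₜ[ℝ] b} with hS
  set J : Ideal (A₁ ⊗[ℝ] A₂) := Ideal.span S with hJ
  -- the residue algebra homs
  let f₁ : A₁ →ₐ[ℝ] ℝ :=
    { toRingHom := (e₁ : IsLocalRing.ResidueField A₁ →+* ℝ).comp (IsLocalRing.residue A₁)
      commutes' := fun r => by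
        exact e₁.commutes r }
  let f₂ : A₂ →ₐ[ℝ] ℝ :=
    { toRingHom := (e₂ : IsLocalRing.ResidueField A₂ →+* ℝ).comp (IsLocalRing.residue A₂)
      commutes' := fun r => by
        exact e₂.commutes r }
  have hf₁ : ∀ a : A₁, f₁ a = 0 ↔ a ∈ IsLocalRing.maximalIdeal A₁ := by
    intro a
    rw [show f₁ a = e₁ (IsLocalRing.residue A₁ a) from rfl,
      ← map_zero e₁, e₁.injective.eq_iff]
    exact Ideal.Quotient.eq_zero_iff_mem
  have hf₂ : ∀ b : A₂, f₂ b = 0 ↔ b ∈ IsLocalRing.maximalIdeal A₂ := by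
    intro b
    rw [show f₂ b = e₂ (IsLocalRing.residue A₂ b) from rfl,
      ← map_zero e₂, e₂.injective.eq_iff]
    exact Ideal.Quotient.eq_zero_iff_mem
  let φ : A₁ ⊗[ℝ] A₂ →ₐ[ℝ] ℝ := Algebra.TensorProduct.productMap f₁ f₂
  have hφt : ∀ (a : A₁) (b : A₂), φ (a ⊗ₜ[ℝ] b) = f₁ a * f₂ b := fun a b =>
    Algebra.TensorProduct.productMap_apply_tmul f₁ f₂ a b
  have hsurj : Function.Surjective φ := fun r =>
    ⟨algebraMap ℝ _ r, by simp [φ]⟩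
  have hmem₁ : ∀ (a : A₁) (b : A₂), a ∈ IsLocalRing.maximalIdeal A₁ → a ⊗ₜ[ℝ] b ∈ J :=
    fun a b ha => Ideal.subset_span ⟨a, b, Or.inl ha, rfl⟩
  have hmem₂ : ∀ (a : A₁) (b : A₂), b ∈ IsLocalRing.maximalIdeal A₂ → a ⊗ₜ[ℝ] b ∈ J :=
    fun a b hb => Ideal.subset_span ⟨a, b, Or.inr hb, rfl⟩
  -- every element is congruent to a scalar mod J
  have key : ∀ x : A₁ ⊗[ℝ] A₂, x - algebraMap ℝ (A₁ ⊗[ℝ] A₂) (φ x) ∈ J := by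
    intro x
    induction x using TensorProduct.induction_on with
    | zero => simp
    | tmul a b =>
      have ha : a - algebraMap ℝ A₁ (f₁ a) ∈ IsLocalRing.maximalIdeal A₁ := by
        rw [← hf₁]; simp
      have hb : b - algebraMap ℝ A₂ (f₂ b) ∈ IsLocalRing.maximalIdeal A₂ := by
        rw [← hf₂]; simp
      have halg : algebraMap ℝ (A₁ ⊗[ℝ] A₂) (φ (a ⊗ₜ[ℝ] b)) =
          (algebraMap ℝ A₁ (f₁ a)) ⊗ₜ[ℝ] (algebraMap ℝ A₂ (f₂ b)) := by
        rw [hφt, map_mul, Algebra.TensorProduct.algebraMap_apply,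
          ← ((Algebra.TensorProduct.includeRight (R := ℝ) (A := A₁)
            (B := A₂)).commutes (f₂ b) :),
          Algebra.TensorProduct.includeRight_apply,
          Algebra.TensorProduct.tmul_mul_tmul, one_mul, mul_one]
      have hdecomp : a ⊗ₜ[ℝ] b - algebraMap ℝ (A₁ ⊗[ℝ] A₂) (φ (a ⊗ₜ[ℝ] b)) =
          (a - algebraMap ℝ A₁ (f₁ a)) ⊗ₜ[ℝ] b +
          (algebraMap ℝ A₁ (f₁ a)) ⊗ₜ[ℝ] (b - algebraMap ℝ A₂ (f₂ b)) := by
        rw [halg, TensorProduct.sub_tmul, TensorProduct.tmul_sub]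
        ring
      rw [hdecomp]
      exact J.add_mem (hmem₁ _ _ ha) (hmem₂ _ _ hb)
    | add x y hx hy =>
      convert J.add_mem hx hy using 1
      rw [map_add, map_add]
      ring
  -- J equals the kernel of φ
  have hker : J = RingHom.ker φ := by
    apply le_antisymm
    · rw [hJ, Ideal.span_le]
      rintro x ⟨a, b, hab, rfl⟩
      rw [SetLike.mem_coe, RingHom.mem_ker]
      show φ (a ⊗ₜ[ℝ] b) = 0
      rcases hab with ha | hb
      · rw [hφt a b, (hf₁ a).2 ha, zero_mul]
      · rw [hφt a b, (hf₂ b).2 hb, mul_zero]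
    · intro x hx
      rw [RingHom.mem_ker] at hx
      have := key x
      rw [hx, map_zero, sub_zero] at this
      exact this
  have hmax : J.IsMaximal := by
    rw [hker]
    exact RingHom.ker_isMaximal_of_surjective φ hsurj
  refine ⟨inferInstance, hmax, ?_, ?_⟩
  · intro M hM
    have hle : J ≤ M := by
      rw [hJ, Ideal.span_le]
      rintro x ⟨a, b, hab, rfl⟩
      have : IsNilpotent (a ⊗ₜ[ℝ] b) := by
        rcases hab with ha | hb
        · obtain ⟨n, hn⟩ := localAlg_nilpotent_of_mem_max ha
          exact ⟨n, by rw [Algebra.TensorProduct.tmul_pow, hn, TensorProduct.zero_tmul]⟩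
        · obtain ⟨n, hn⟩ := localAlg_nilpotent_of_mem_max hb
          exact ⟨n, by rw [Algebra.TensorProduct.tmul_pow, hn, TensorProduct.tmul_zero]⟩
      obtain ⟨n, hn⟩ := this
      exact hM.isPrime.mem_of_pow_mem n (by rw [hn]; exact M.zero_mem)
    exact (hmax.eq_of_le hM.ne_top hle).symm
  · exact ⟨hker ▸ Ideal.quotientKerAlgEquivOfSurjective hsurj⟩
end

section
/- Let P be a smooth manifold (finite-dimensional, Hausdorff, paracompact), let A be a local algebra with residue homomorphism 0_A : A → ℝ, let p ∈ P, and let u : C^∞(P) → A be an identity-preserving ℝ-algebra homomorphism such that 0_A ∘ u equals the evaluation map ev_p : f ↦ f(p). Then u(f) = 0 for every smooth function f : P → ℝ that vanishes on some neighbourhood of p. -/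
/-!
Choose a bump function `g` at `p` supported where `f` vanishes, so that `f * g = 0`. Since
`ker ρ` is the maximal ideal of the local ring `A` and `ρ (u g) = g p = 1`, `u g` is a unit,
and `u f * u g = u (f * g) = 0` forces `u f = 0`.
-/

open Filter

open scoped Manifold Topology ContDiff

theorem IsLocalRing.isUnit_of_algHom_apply_ne_zero {K A : Type*} [Field K] [CommRing A]
    [IsLocalRing A] [Algebra K A] (ρ : A →ₐ[K] K) {a : A} (ha : ρ a ≠ 0) : IsUnit a := by
  by_contra hunit
  have hker : a ∈ RingHom.ker (ρ : A →+* K) := by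
    rw [IsLocalRing.ker_eq_maximalIdeal (ρ : A →+* K) fun r => ⟨algebraMap K A r, ρ.commutes r⟩]
    exact hunit
  exact ha hker

theorem exists_contMDiff_eq_one_mul_eq_zero_of_eventually_eq_zero
    {E H P : Type*} [NormedAddCommGroup E] [NormedSpace ℝ E] [FiniteDimensional ℝ E]
    [TopologicalSpace H] (I : ModelWithCorners ℝ E H) [TopologicalSpace P] [ChartedSpace H P]
    [IsManifold I ∞ P] [T2Space P] {p : P} {f : P → ℝ} (hf : ∀ᶠ x in 𝓝 p, f x = 0) :
    ∃ g : P → ℝ, ContMDiff I 𝓘(ℝ, ℝ) ∞ g ∧ g p = 1 ∧ ∀ x, f x * g x = 0 := by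
  obtain ⟨g, hg_supp, -⟩ := (SmoothBumpFunction.nhds_basis_support (I := I) hf).mem_iff.mp hf
  refine ⟨g, g.contMDiff, g.eq_one, fun x => ?_⟩
  by_cases hx : g x = 0
  · rw [hx, mul_zero]
  · rw [hg_supp (subset_closure hx), zero_mul]

theorem pointProche_kills_locally_vanishing_general
    (E : Type) [NormedAddCommGroup E] [NormedSpace ℝ E] [FiniteDimensional ℝ E]
    (H : Type) [TopologicalSpace H] (I : ModelWithCorners ℝ E H)
    (P : Type) [TopologicalSpace P] [ChartedSpace H P] [IsManifold I (⊤ : ℕ∞) P]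
    [T2Space P]
    (A : Type) [CommRing A] [Algebra ℝ A] [IsLocalRing A]
    (ρ : A →ₐ[ℝ] ℝ)
    (p : P)
    (u : ContMDiffMap I 𝓘(ℝ, ℝ) P ℝ (⊤ : ℕ∞) →ₐ[ℝ] A)
    (hu : ∀ f : ContMDiffMap I 𝓘(ℝ, ℝ) P ℝ (⊤ : ℕ∞), ρ (u f) = f p) :
    ∀ f : ContMDiffMap I 𝓘(ℝ, ℝ) P ℝ (⊤ : ℕ∞), (∀ᶠ x in nhds p, f x = 0) → u f = 0 := by
  intro f hf
  obtain ⟨g, hg_smooth, hg_one, hfg⟩ :=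
    exists_contMDiff_eq_one_mul_eq_zero_of_eventually_eq_zero I hf
  let G : ContMDiffMap I 𝓘(ℝ, ℝ) P ℝ (⊤ : ℕ∞) := ⟨g, hg_smooth⟩
  have hG_unit : IsUnit (u G) :=
    IsLocalRing.isUnit_of_algHom_apply_ne_zero ρ <| by
      rw [hu G, show G p = 1 from hg_one]
      exact one_ne_zero
  have hfG : f * G = 0 := ContMDiffMap.ext hfg
  rw [← hG_unit.mul_left_eq_zero, ← map_mul, hfG, map_zero]

/-- Let `P` be a smooth manifold (finite-dimensional, Hausdorff,
paracompact), let `A` be a local algebra with residue homomorphism `0_A : A → ℝ`, let `p ∈ P`,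
and let `u : C^∞(P) → A` be an identity-preserving `ℝ`-algebra homomorphism such that
`0_A ∘ u` is the evaluation at `p`.  Then `u(f) = 0` for every smooth function `f : P → ℝ`
vanishing on some neighbourhood of `p`. -/
theorem pointProche_kills_locally_vanishing
    (E : Type) [NormedAddCommGroup E] [NormedSpace ℝ E] [FiniteDimensional ℝ E]
    (H : Type) [TopologicalSpace H] (I : ModelWithCorners ℝ E H)
    (P : Type) [TopologicalSpace P] [ChartedSpace H P] [IsManifold I (⊤ : ℕ∞) P]
    [T2Space P] [ParacompactSpace P]
    (A : Type) [CommRing A] [Algebra ℝ A] [FiniteDimensional ℝ A] [IsLocalRing A]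
    (hres : Nonempty (IsLocalRing.ResidueField A ≃ₐ[ℝ] ℝ))
    (ρ : A →ₐ[ℝ] ℝ)
    (p : P)
    (u : ContMDiffMap I 𝓘(ℝ, ℝ) P ℝ (⊤ : ℕ∞) →ₐ[ℝ] A)
    (hu : ∀ f : ContMDiffMap I 𝓘(ℝ, ℝ) P ℝ (⊤ : ℕ∞), ρ (u f) = f p) :
    ∀ f : ContMDiffMap I 𝓘(ℝ, ℝ) P ℝ (⊤ : ℕ∞), (∀ᶠ x in nhds p, f x = 0) → u f = 0 :=
  pointProche_kills_locally_vanishing_general E H I P A ρ p u hu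
end
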